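/- arXiv:0706.0222 — 2 statements merged into one kernel-verified Lean document; each statement's English description precedes it below -/
import Mathlib

section
/- The Lie algebra L_{6,1} (the inhomogeneous algebra Iso(3)) is a contraction of so(4), the real Lie algebra of 4×4 real skew-symmetric matrices with the commutator bracket. -/
open Filter Topology

/-- `IsContraction g h` : the Lie algebra `h` is a contraction of the Lie algebra `g`. -/
def IsContraction (g h : Type*) [LieRing g] [LieAlgebra ℝ g] [TopologicalSpace g]
    [LieRing h] [LieAlgebra ℝ h] : Prop :=
  ∃ (f : ℝ → (g ≃ₗ[ℝ] g)) (e : g ≃ₗ[ℝ] h), ∀ X Y : g,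
    Filter.Tendsto (fun t : ℝ => (f t).symm ⁅f t X, f t Y⁆) Filter.atTop
      (nhds (e.symm ⁅e X, e Y⁆))

/-- Structure constants of `L_{6,1}` (upper triangular part, 0-based indices). -/
def L61T {L : Type*} [AddCommGroup L] [Module ℝ L] (b : Fin 6 → L) : Fin 6 → Fin 6 → L :=
  fun i j =>
    if i = 1 ∧ j = 2 then b 0 else
    if i = 0 ∧ j = 1 then b 2 else
    if i = 0 ∧ j = 2 then -b 1 else
    if i = 0 ∧ j = 4 then b 5 else
    if i = 0 ∧ j = 5 then -b 4 else
    if i = 1 ∧ j = 3 then -b 5 else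
    if i = 1 ∧ j = 5 then b 3 else
    if i = 2 ∧ j = 3 then b 4 else
    if i = 2 ∧ j = 4 then -b 3 else 0

attribute [local instance 100] LieRing.ofAssociativeRing

/-- `so(4)`: the Lie algebra of 4×4 real skew-symmetric matrices (`Aᵀ·1 + 1·A = 0`). -/
noncomputable abbrev so4 : LieSubalgebra ℝ (Matrix (Fin 4) (Fin 4) ℝ) :=
  skewAdjointMatricesLieSubalgebra (1 : Matrix (Fin 4) (Fin 4) ℝ)


/-!
Write a skew-symmetric 4×4 matrix as a pair `(a, u)`: its upper-left 3×3 block is the matrix of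
`a ⨯₃ ·` and its last column is `u`. The congruence `S ↦ Dᵀ S D` by `D = diag(1, 1, 1, c)` fixes
`a` and scales `u` by `c`; it pulls the commutator back to `X (D Dᵀ) Y - Y (D Dᵀ) X`. As `c → 0`
this tends to `X P Y - Y P X` with `P = diag(1, 1, 1, 0)`, which is the bracket
`⁅(a, u), (a', u')⁆ = (a ⨯₃ a', a ⨯₃ u' - a' ⨯₃ u)` of `iso(3) = so(3) ⋉ ℝ³`, i.e. of `L_{6,1}`.
-/

open Matrix

section CongrSkewAdjoint

variable {n R : Type*} [Fintype n] [DecidableEq n] [CommRing R]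

theorem mem_skewAdjointMatricesLieSubalgebra_one_iff {S : Matrix n n R} :
    S ∈ skewAdjointMatricesLieSubalgebra (1 : Matrix n n R) ↔ Sᵀ = -S := by
  rw [mem_skewAdjointMatricesLieSubalgebra, mem_skewAdjointMatricesSubmodule,
    Matrix.IsSkewAdjoint, Matrix.IsAdjointPair, mul_one, one_mul]

theorem transpose_mul_mul_mem_skewAdjointMatricesLieSubalgebra_one {S : Matrix n n R}
    (hS : S ∈ skewAdjointMatricesLieSubalgebra (1 : Matrix n n R)) (D : Matrix n n R) :
    Dᵀ * S * D ∈ skewAdjointMatricesLieSubalgebra (1 : Matrix n n R) := by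
  rw [mem_skewAdjointMatricesLieSubalgebra_one_iff] at hS ⊢
  simp [transpose_mul, hS, Matrix.mul_assoc]

def congrSkewAdjoint (D : (Matrix n n R)ˣ) :
    skewAdjointMatricesLieSubalgebra (1 : Matrix n n R) ≃ₗ[R]
      skewAdjointMatricesLieSubalgebra (1 : Matrix n n R) where
  toFun S := ⟨(D : Matrix n n R)ᵀ * S * D,
    transpose_mul_mul_mem_skewAdjointMatricesLieSubalgebra_one S.2 _⟩
  invFun S := ⟨(↑D⁻¹ : Matrix n n R)ᵀ * S * ↑D⁻¹,
    transpose_mul_mul_mem_skewAdjointMatricesLieSubalgebra_one S.2 _⟩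
  map_add' S T := Subtype.ext <| by simp [Matrix.mul_add, Matrix.add_mul]
  map_smul' c S := Subtype.ext <| by simp
  left_inv S := Subtype.ext <| by
    simp only [← Matrix.mul_assoc, ← transpose_mul, Units.mul_inv, transpose_one, one_mul]
    simp [Matrix.mul_assoc]
  right_inv S := Subtype.ext <| by
    simp only [← Matrix.mul_assoc, ← transpose_mul, Units.inv_mul, transpose_one, one_mul]
    simp [Matrix.mul_assoc]

theorem coe_congrSkewAdjoint_symm_lie (D : (Matrix n n R)ˣ)
    (X Y : skewAdjointMatricesLieSubalgebra (1 : Matrix n n R)) :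
    (((congrSkewAdjoint D).symm ⁅congrSkewAdjoint D X, congrSkewAdjoint D Y⁆ :
      skewAdjointMatricesLieSubalgebra (1 : Matrix n n R)) : Matrix n n R) =
      X.1 * ((D : Matrix n n R) * (D : Matrix n n R)ᵀ) * Y.1 -
        Y.1 * ((D : Matrix n n R) * (D : Matrix n n R)ᵀ) * X.1 := by
  simp only [congrSkewAdjoint, LinearEquiv.coe_symm_mk', LinearEquiv.coe_mk, LinearMap.coe_mk,
    AddHom.coe_mk, LieSubalgebra.coe_bracket, Ring.lie_def, Matrix.mul_sub, Matrix.sub_mul,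
    ← Matrix.mul_assoc, ← transpose_mul, Units.mul_inv, transpose_one, one_mul]
  simp only [Matrix.mul_assoc, Units.mul_inv, Matrix.mul_one]

end CongrSkewAdjoint

theorem isContraction_of_tendsto_mul_transpose {n : Type*} [Fintype n] [DecidableEq n]
    {h : Type*} [LieRing h] [LieAlgebra ℝ h] (D : ℝ → (Matrix n n ℝ)ˣ) {G : Matrix n n ℝ}
    (hD : Tendsto (fun t => (D t : Matrix n n ℝ) * (D t : Matrix n n ℝ)ᵀ) atTop (𝓝 G))
    (e : skewAdjointMatricesLieSubalgebra (1 : Matrix n n ℝ) ≃ₗ[ℝ] h)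
    (he : ∀ X Y, ((e.symm ⁅e X, e Y⁆ : skewAdjointMatricesLieSubalgebra (1 : Matrix n n ℝ)) :
      Matrix n n ℝ) = X.1 * G * Y.1 - Y.1 * G * X.1) :
    IsContraction (skewAdjointMatricesLieSubalgebra (1 : Matrix n n ℝ)) h := by
  refine ⟨fun t => congrSkewAdjoint (D t), e, fun X Y => ?_⟩
  rw [IsEmbedding.subtypeVal.tendsto_nhds_iff]
  simp only [Function.comp_def, coe_congrSkewAdjoint_symm_lie, he]
  exact ((tendsto_const_nhds.mul hD).mul tendsto_const_nhds).sub
    ((tendsto_const_nhds.mul hD).mul tendsto_const_nhds)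

/-- The bracket of `iso(3) = so(3) ⋉ ℝ³`, with rotation part `a` and translation part `u` of
`v = (a, u)`. -/
def iso3Bracket (v w : Fin 6 → ℝ) : Fin 6 → ℝ :=
  Fin.append (![v 0, v 1, v 2] ⨯₃ ![w 0, w 1, w 2])
    (![v 0, v 1, v 2] ⨯₃ ![w 3, w 4, w 5] - ![w 0, w 1, w 2] ⨯₃ ![v 3, v 4, v 5])

def so4OfCoords (v : Fin 6 → ℝ) : Matrix (Fin 4) (Fin 4) ℝ :=
  !![0, -v 2, v 1, v 3; v 2, 0, -v 0, v 4; -v 1, v 0, 0, v 5; -v 3, -v 4, -v 5, 0]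

theorem so4OfCoords_mem (v : Fin 6 → ℝ) : so4OfCoords v ∈ so4 := by
  rw [mem_skewAdjointMatricesLieSubalgebra_one_iff]
  ext i j
  fin_cases i <;> fin_cases j <;> simp [so4OfCoords]

noncomputable def so4EquivCoords : so4 ≃ₗ[ℝ] (Fin 6 → ℝ) where
  toFun S := ![S.1 2 1, S.1 0 2, S.1 1 0, S.1 0 3, S.1 1 3, S.1 2 3]
  invFun v := ⟨so4OfCoords v, so4OfCoords_mem v⟩
  map_add' S T := by ext k; fin_cases k <;> rfl
  map_smul' c S := by ext k; fin_cases k <;> rfl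
  left_inv S := by
    refine Subtype.ext (Matrix.ext fun i j => ?_)
    have hji := congr_fun₂ (mem_skewAdjointMatricesLieSubalgebra_one_iff.mp S.2) i j
    fin_cases i <;> fin_cases j <;> simp [so4OfCoords] at hji ⊢ <;> linarith
  right_inv v := by ext k; fin_cases k <;> rfl

theorem so4OfCoords_so4EquivCoords (X : so4) : so4OfCoords (so4EquivCoords X) = X :=
  congrArg Subtype.val (so4EquivCoords.symm_apply_apply X)

theorem so4OfCoords_iso3Bracket (v w : Fin 6 → ℝ) :
    so4OfCoords (iso3Bracket v w) =
      so4OfCoords v * diagonal ![1, 1, 1, 0] * so4OfCoords w -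
        so4OfCoords w * diagonal ![1, 1, 1, 0] * so4OfCoords v := by
  ext i j
  simp only [Matrix.sub_apply, Matrix.mul_apply, Fin.sum_univ_four]
  fin_cases i <;> fin_cases j <;>
    simp [so4OfCoords, iso3Bracket, cross_apply, Fin.append, Fin.addCases] <;> ring

noncomputable def so4EquivOfBasis {L : Type*} [AddCommGroup L] [Module ℝ L]
    (b : Module.Basis (Fin 6) ℝ L) : so4 ≃ₗ[ℝ] L :=
  so4EquivCoords.trans b.equivFun.symm

section L61

variable {L : Type*} [LieRing L] [LieAlgebra ℝ L]

theorem L61T_eq_zero_of_le (b : Fin 6 → L) {i j : Fin 6} (hji : j ≤ i) : L61T b i j = 0 := by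
  fin_cases i <;> fin_cases j <;> simp_all [L61T]

theorem lie_eq_L61T_sub_L61T {b : Fin 6 → L}
    (hL : ∀ i j : Fin 6, i < j → ⁅b i, b j⁆ = L61T b i j) (i j : Fin 6) :
    ⁅b i, b j⁆ = L61T b i j - L61T b j i := by
  rcases lt_trichotomy i j with hij | rfl | hij
  · rw [hL i j hij, L61T_eq_zero_of_le b hij.le, sub_zero]
  · rw [lie_self, sub_self]
  · rw [← lie_skew, hL j i hij, L61T_eq_zero_of_le b hij.le, zero_sub]

theorem sum_smul_lie_sum_smul {b : Fin 6 → L}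
    (hL : ∀ i j : Fin 6, i < j → ⁅b i, b j⁆ = L61T b i j) (v w : Fin 6 → ℝ) :
    ⁅∑ i, v i • b i, ∑ j, w j • b j⁆ = ∑ k, iso3Bracket v w k • b k := by
  simp only [sum_lie, lie_sum, smul_lie, lie_smul, lie_eq_L61T_sub_L61T hL]
  simp [Fin.sum_univ_six, L61T, iso3Bracket, cross_apply, Fin.append, Fin.addCases]
  module

theorem coe_so4EquivOfBasis_symm_lie {b : Module.Basis (Fin 6) ℝ L}
    (hL : ∀ i j : Fin 6, i < j → ⁅b i, b j⁆ = L61T b i j) (X Y : so4) :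
    (((so4EquivOfBasis b).symm ⁅so4EquivOfBasis b X, so4EquivOfBasis b Y⁆ : so4) :
      Matrix (Fin 4) (Fin 4) ℝ) =
        X.1 * diagonal ![1, 1, 1, 0] * Y.1 - Y.1 * diagonal ![1, 1, 1, 0] * X.1 := by
  have hlie : ⁅so4EquivOfBasis b X, so4EquivOfBasis b Y⁆ =
      b.equivFun.symm (iso3Bracket (so4EquivCoords X) (so4EquivCoords Y)) := by
    simp only [so4EquivOfBasis, LinearEquiv.trans_apply, Module.Basis.equivFun_symm_apply]
    exact sum_smul_lie_sum_smul hL _ _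
  rw [hlie, so4EquivOfBasis, LinearEquiv.trans_symm, LinearEquiv.trans_apply,
    LinearEquiv.symm_symm, LinearEquiv.apply_symm_apply, ← so4OfCoords_so4EquivCoords X,
    ← so4OfCoords_so4EquivCoords Y]
  exact so4OfCoords_iso3Bracket _ _

end L61

theorem isUnit_diagonal_one_one_one_of_ne_zero {c : ℝ} (hc : c ≠ 0) :
    IsUnit (diagonal ![1, 1, 1, c] : Matrix (Fin 4) (Fin 4) ℝ) := by
  rw [isUnit_diagonal, Pi.isUnit_iff]
  intro i
  fin_cases i <;> simp [hc]

theorem tendsto_diagonal_exp_neg_mul_transpose :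
    Tendsto (fun t : ℝ => (diagonal ![1, 1, 1, Real.exp (-t)] : Matrix (Fin 4) (Fin 4) ℝ) *
      (diagonal ![1, 1, 1, Real.exp (-t)])ᵀ) atTop (𝓝 (diagonal ![1, 1, 1, 0])) := by
  have hcont : Continuous fun c : ℝ => (diagonal ![1, 1, 1, c] : Matrix (Fin 4) (Fin 4) ℝ) *
      (diagonal ![1, 1, 1, c])ᵀ := by
    fun_prop
  have hP : (diagonal ![1, 1, 1, 0] : Matrix (Fin 4) (Fin 4) ℝ) =
      diagonal ![1, 1, 1, 0] * (diagonal ![1, 1, 1, 0])ᵀ := by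
    rw [diagonal_transpose, diagonal_mul_diagonal]
    congr 1
    ext i
    fin_cases i <;> simp
  rw [hP]
  exact (hcont.tendsto 0).comp Real.tendsto_exp_neg_atTop_nhds_zero

/-- `L_{6,1} = Iso(3)` is a contraction of `so(4)`. -/
theorem L61_is_contraction_of_so4
    (L : Type) [LieRing L] [LieAlgebra ℝ L] (b : Module.Basis (Fin 6) ℝ L)
    (hL : ∀ i j : Fin 6, i < j → ⁅b i, b j⁆ = L61T (⇑b) i j) :
    IsContraction (↥so4) L :=
  isContraction_of_tendsto_mul_transpose
    (fun t => (isUnit_diagonal_one_one_one_of_ne_zero (Real.exp_pos (-t)).ne').unit)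
    tendsto_diagonal_exp_neg_mul_transpose (so4EquivOfBasis b) (coe_so4EquivOfBasis_symm_lie hL)
end

section
/- The Lorentz algebra so(3,1) contracts onto both the Lie algebra L_{6,1} (the inhomogeneous algebra Iso(3)) and the Lie algebra L_{6,4} (the inhomogeneous algebra Isl(2,ℝ)). -/
open Filter Topology

attribute [local instance 100] LieRing.ofAssociativeRing

/-- Structure constants of `L_{6,4}` (upper triangular part, 0-based indices). -/
def L64T {L : Type*} [AddCommGroup L] [Module ℝ L] (b : Fin 6 → L) : Fin 6 → Fin 6 → L :=
  fun i j =>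
    if i = 0 ∧ j = 1 then (2 : ℝ) • b 1 else
    if i = 0 ∧ j = 2 then (-2 : ℝ) • b 2 else
    if i = 1 ∧ j = 2 then b 0 else
    if i = 0 ∧ j = 3 then (2 : ℝ) • b 3 else
    if i = 0 ∧ j = 5 then (-2 : ℝ) • b 5 else
    if i = 1 ∧ j = 4 then (2 : ℝ) • b 3 else
    if i = 1 ∧ j = 5 then b 4 else
    if i = 2 ∧ j = 3 then b 4 else
    if i = 2 ∧ j = 4 then (2 : ℝ) • b 5 else 0

/-- `so(3,1)`: `4×4` real matrices `A` with `Aᵀ J + J A = 0`, `J = diag(1,1,1,-1)`. -/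
noncomputable abbrev so31 : LieSubalgebra ℝ (Matrix (Fin 4) (Fin 4) ℝ) :=
  skewAdjointMatricesLieSubalgebra (Matrix.diagonal ![1, 1, 1, -1])

/-! The contractions are İnönü–Wigner contractions. An involutive automorphism `θ` splits a real
Lie algebra as `𝔨 ⊕ 𝔭` into its `±1`-eigenspaces, with `[𝔨, 𝔨] ⊆ 𝔨`, `[𝔨, 𝔭] ⊆ 𝔭` and
`[𝔭, 𝔭] ⊆ 𝔨`. Rescaling `𝔭` by `s` turns the bracket into `[X, Y] + (s² - 1) [X_𝔭, Y_𝔭]`, which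
tends to the semidirect-product bracket of `𝔨 ⋉ 𝔭` as `s → 0`. In `so(3,1)`, conjugation by
`diag(1,1,1,-1)` has `𝔨 = so(3)` and gives `Iso(3) = L_{6,1}`; conjugation by `diag(-1,1,1,1)`
has `𝔨 = so(2,1) ≅ sl(2,ℝ)` and gives `Isl(2,ℝ) = L_{6,4}`. The structure constants are checked
on explicit bases of `so(3,1)` adapted to each splitting. -/

open Matrix

noncomputable section InonuWigner

variable {K g : Type*} [Field K] [LieRing g] [LieAlgebra K g] (θ : g →ₗ⁅K⁆ g)

def oddPart : g →ₗ[K] g := (2 : K)⁻¹ • (LinearMap.id - θ.toLinearMap)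

def contractedBracket : g →ₗ[K] g →ₗ[K] g :=
  LinearMap.mk₂ K (fun X Y => ⁅X, Y⁆ - ⁅oddPart θ X, oddPart θ Y⁆)
    (fun X X' Y => by simp only [add_lie, map_add]; abel)
    (fun r X Y => by simp only [smul_lie, map_smul, smul_sub])
    (fun X Y Y' => by simp only [lie_add, map_add]; abel)
    (fun r X Y => by simp only [lie_smul, map_smul, smul_sub])

/-- The identity on the `θ`-fixed part and multiplication by `s` on the `θ`-odd part. -/
def gradedScaling (s : K) : g →ₗ[K] g := LinearMap.id - (1 - s) • oddPart θ

lemma gradedScaling_one : gradedScaling θ 1 = LinearMap.id := by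
  simp [gradedScaling]

variable {θ}

lemma contractedBracket_apply (X Y : g) :
    contractedBracket θ X Y = ⁅X, Y⁆ - ⁅oddPart θ X, oddPart θ Y⁆ := rfl

lemma contractedBracket_isAlt : (contractedBracket θ).IsAlt := fun X => by
  rw [contractedBracket_apply, lie_self, lie_self, sub_zero]

lemma contractedBracket_of_apply_eq_self {X : g} (hX : θ X = X) (Y : g) :
    contractedBracket θ X Y = ⁅X, Y⁆ := by
  simp [contractedBracket_apply, oddPart, hX]

variable [NeZero (2 : K)]

lemma contractedBracket_of_apply_eq_neg {X Y : g} (hX : θ X = -X) (hY : θ Y = -Y) :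
    contractedBracket θ X Y = 0 := by
  simp only [contractedBracket_apply, oddPart, LinearMap.smul_apply, LinearMap.sub_apply,
    LinearMap.id_apply, LieHom.coe_toLinearMap, hX, hY, sub_neg_eq_add, ← two_smul K, smul_smul,
    inv_mul_cancel₀ (two_ne_zero' K), one_smul, sub_self]

lemma oddPart_oddPart (hθ : ∀ X, θ (θ X) = X) (X : g) :
    oddPart θ (oddPart θ X) = oddPart θ X := by
  simp only [oddPart, LinearMap.smul_apply, LinearMap.sub_apply, LinearMap.id_apply,
    LieHom.coe_toLinearMap, map_smul, map_sub, hθ]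
  match_scalars <;> field_simp <;> ring

lemma gradedScaling_comp (hθ : ∀ X, θ (θ X) = X) (r s : K) :
    gradedScaling θ r ∘ₗ gradedScaling θ s = gradedScaling θ (r * s) := by
  ext X
  simp only [gradedScaling, LinearMap.comp_apply, LinearMap.sub_apply, LinearMap.smul_apply,
    LinearMap.id_apply, map_sub, map_smul, oddPart_oddPart hθ]
  module

def gradedScalingEquiv (hθ : ∀ X, θ (θ X) = X) (s : Kˣ) : g ≃ₗ[K] g :=
  LinearEquiv.ofLinearMap (gradedScaling θ s) (gradedScaling θ ↑s⁻¹)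
    (by rw [gradedScaling_comp hθ, Units.mul_inv, gradedScaling_one])
    (by rw [gradedScaling_comp hθ, Units.inv_mul, gradedScaling_one])

lemma gradedScaling_inv_lie (hθ : ∀ X, θ (θ X) = X) {s : K} (hs : s ≠ 0) (X Y : g) :
    gradedScaling θ s⁻¹ ⁅gradedScaling θ s X, gradedScaling θ s Y⁆
      = ⁅X, Y⁆ + (s ^ 2 - 1) • ⁅oddPart θ X, oddPart θ Y⁆ := by
  simp only [gradedScaling, oddPart, LinearMap.sub_apply, LinearMap.smul_apply,
    LinearMap.id_apply, LieHom.coe_toLinearMap, map_sub, map_smul, LieHom.map_lie, hθ,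
    lie_sub, sub_lie, lie_smul, smul_lie]
  match_scalars <;> field_simp <;> ring

lemma gradedScalingEquiv_symm_lie (hθ : ∀ X, θ (θ X) = X) (s : Kˣ) (X Y : g) :
    (gradedScalingEquiv hθ s).symm ⁅gradedScalingEquiv hθ s X, gradedScalingEquiv hθ s Y⁆
      = ⁅X, Y⁆ + ((s : K) ^ 2 - 1) • ⁅oddPart θ X, oddPart θ Y⁆ := by
  rw [← gradedScaling_inv_lie hθ s.ne_zero, ← Units.val_inv_eq_inv_val]
  rfl

lemma tendsto_gradedScalingEquiv_symm_lie {α : Type*} {l : Filter α} [TopologicalSpace K]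
    [IsTopologicalRing K] [TopologicalSpace g] [ContinuousAdd g] [ContinuousSMul K g]
    (hθ : ∀ X, θ (θ X) = X) {s : α → Kˣ} (hs : Tendsto (fun a => (s a : K)) l (𝓝 0)) (X Y : g) :
    Tendsto (fun a => (gradedScalingEquiv hθ (s a)).symm
        ⁅gradedScalingEquiv hθ (s a) X, gradedScalingEquiv hθ (s a) Y⁆)
      l (𝓝 (contractedBracket θ X Y)) := by
  simp only [gradedScalingEquiv_symm_lie]
  have h : Tendsto (fun a => (s a : K) ^ 2 - 1) l (𝓝 (0 ^ 2 - 1)) := (hs.pow 2).sub_const 1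
  rw [zero_pow two_ne_zero, zero_sub] at h
  rw [contractedBracket_apply, sub_eq_add_neg, ← neg_one_smul K ⁅oddPart θ X, _⁆]
  exact (h.smul_const _).const_add _

end InonuWigner

theorem LinearMap.IsAlt.ext_basis_of_lt {R M N ι : Type*} [CommRing R] [AddCommGroup M]
    [Module R M] [AddCommGroup N] [Module R N] [LinearOrder ι] {B₁ B₂ : M →ₗ[R] M →ₗ[R] N}
    (h₁ : B₁.IsAlt) (h₂ : B₂.IsAlt) (b : Module.Basis ι R M)
    (h : ∀ i j, i < j → B₁ (b i) (b j) = B₂ (b i) (b j)) : B₁ = B₂ := by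
  refine LinearMap.ext_basis b b fun i j => ?_
  rcases lt_trichotomy i j with hij | rfl | hji
  · exact h i j hij
  · rw [h₁, h₂]
  · rw [← h₁.neg, ← h₂.neg, h j i hji]

theorem isContraction_of_basis {g h ι : Type*} [LieRing g] [LieAlgebra ℝ g] [TopologicalSpace g]
    [ContinuousAdd g] [ContinuousSMul ℝ g] [LieRing h] [LieAlgebra ℝ h] [LinearOrder ι]
    {θ : g →ₗ⁅ℝ⁆ g} (hθ : ∀ X, θ (θ X) = X) (B : Module.Basis ι ℝ g) (c : Module.Basis ι ℝ h)
    (hBc : ∀ i j, i < j → ⁅c i, c j⁆ = B.equiv c (.refl ι) (contractedBracket θ (B i) (B j))) :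
    IsContraction g h := by
  set e := B.equiv c (.refl ι)
  have he : (LieModule.toEnd ℝ h h).toLinearMap.compl₁₂ e.toLinearMap e.toLinearMap
      = (contractedBracket θ).compr₂ e.toLinearMap := by
    refine LinearMap.IsAlt.ext_basis_of_lt (fun X => ?_) (fun X => ?_) B fun i j hij => ?_
    · simp
    · simp [contractedBracket_isAlt.self_eq_zero]
    · simp [e, hBc i j hij]
  refine ⟨fun t => gradedScalingEquiv hθ (Units.mk0 _ (Real.exp_ne_zero (-t))), e,
    fun X Y => ?_⟩
  rw [show ⁅e X, e Y⁆ = e (contractedBracket θ X Y) from LinearMap.congr_fun₂ he X Y,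
    e.symm_apply_apply]
  exact tendsto_gradedScalingEquiv_symm_lie hθ Real.tendsto_exp_neg_atTop_nhds_zero X Y

noncomputable def LieSubalgebra.basisOfInjective {R L ι : Type*} [CommRing R] [LieRing L]
    [LieAlgebra R L] [Finite ι] (K : LieSubalgebra R L) (Φ : (ι → R) →ₗ[R] L)
    (hinj : Function.Injective Φ) (hrange : LinearMap.range Φ = K.toSubmodule) :
    Module.Basis ι R K :=
  (Pi.basisFun R ι).map ((LinearEquiv.ofInjective Φ hinj).trans (LinearEquiv.ofEq _ _ hrange))

lemma LieSubalgebra.coe_basisOfInjective {R L ι : Type*} [CommRing R] [LieRing L]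
    [LieAlgebra R L] [Finite ι] [DecidableEq ι] (K : LieSubalgebra R L) (Φ : (ι → R) →ₗ[R] L)
    (hinj : Function.Injective Φ) (hrange : LinearMap.range Φ = K.toSubmodule) (i : ι) :
    (K.basisOfInjective Φ hinj hrange i : L) = Φ (Pi.single i 1) := by
  simp only [basisOfInjective, Module.Basis.map_apply, Pi.basisFun_apply, LinearEquiv.trans_apply]
  rfl

section SkewAdjointConj

variable {n R : Type*} [Fintype n] [DecidableEq n] [CommRing R]

def skewAdjointConj (J Q : Matrix n n R) (hQ : Q * Q = 1) (hQJ : Qᵀ * J = J * Q) :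
    skewAdjointMatricesLieSubalgebra J →ₗ⁅R⁆ skewAdjointMatricesLieSubalgebra J where
  toFun A := ⟨Q * A * Q, by
    have hA := A.2
    simp only [mem_skewAdjointMatricesLieSubalgebra, mem_skewAdjointMatricesSubmodule,
      Matrix.IsSkewAdjoint, Matrix.IsAdjointPair] at hA ⊢
    rw [transpose_mul, transpose_mul, Matrix.mul_assoc, Matrix.mul_assoc, hQJ,
      ← Matrix.mul_assoc _ J, hA, ← Matrix.mul_assoc, ← Matrix.mul_assoc, hQJ]
    noncomm_ring⟩
  map_add' A B := Subtype.ext (by simp [Matrix.mul_add, Matrix.add_mul])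
  map_smul' r A := Subtype.ext (by simp)
  map_lie' {A B} := Subtype.ext <| by
    change Q * ⁅(A : Matrix n n R), (B : Matrix n n R)⁆ * Q = ⁅Q * A * Q, Q * B * Q⁆
    simp only [Ring.lie_def, Matrix.mul_sub, Matrix.sub_mul, Matrix.mul_assoc]
    simp only [← Matrix.mul_assoc Q Q, hQ, Matrix.one_mul]

lemma coe_skewAdjointConj (J Q : Matrix n n R) (hQ : Q * Q = 1) (hQJ : Qᵀ * J = J * Q)
    (A : skewAdjointMatricesLieSubalgebra J) :
    (skewAdjointConj J Q hQ hQJ A : Matrix n n R) = Q * A * Q := rfl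

lemma skewAdjointConj_apply_apply (J Q : Matrix n n R) (hQ : Q * Q = 1) (hQJ : Qᵀ * J = J * Q)
    (A : skewAdjointMatricesLieSubalgebra J) :
    skewAdjointConj J Q hQ hQJ (skewAdjointConj J Q hQ hQJ A) = A :=
  Subtype.ext <| by
    simp only [coe_skewAdjointConj, ← Matrix.mul_assoc, hQ, Matrix.one_mul]
    rw [Matrix.mul_assoc, hQ, Matrix.mul_one]

end SkewAdjointConj

theorem Matrix.mul_fin_four {α : Type*} [AddCommMonoid α] [Mul α]
    (a₁₁ a₁₂ a₁₃ a₁₄ a₂₁ a₂₂ a₂₃ a₂₄ a₃₁ a₃₂ a₃₃ a₃₄ a₄₁ a₄₂ a₄₃ a₄₄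
      b₁₁ b₁₂ b₁₃ b₁₄ b₂₁ b₂₂ b₂₃ b₂₄ b₃₁ b₃₂ b₃₃ b₃₄ b₄₁ b₄₂ b₄₃ b₄₄ : α) :
    !![a₁₁, a₁₂, a₁₃, a₁₄; a₂₁, a₂₂, a₂₃, a₂₄; a₃₁, a₃₂, a₃₃, a₃₄; a₄₁, a₄₂, a₄₃, a₄₄] *
      !![b₁₁, b₁₂, b₁₃, b₁₄; b₂₁, b₂₂, b₂₃, b₂₄; b₃₁, b₃₂, b₃₃, b₃₄; b₄₁, b₄₂, b₄₃, b₄₄] =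
    !![a₁₁*b₁₁ + a₁₂*b₂₁ + a₁₃*b₃₁ + a₁₄*b₄₁, a₁₁*b₁₂ + a₁₂*b₂₂ + a₁₃*b₃₂ + a₁₄*b₄₂,
        a₁₁*b₁₃ + a₁₂*b₂₃ + a₁₃*b₃₃ + a₁₄*b₄₃, a₁₁*b₁₄ + a₁₂*b₂₄ + a₁₃*b₃₄ + a₁₄*b₄₄;
       a₂₁*b₁₁ + a₂₂*b₂₁ + a₂₃*b₃₁ + a₂₄*b₄₁, a₂₁*b₁₂ + a₂₂*b₂₂ + a₂₃*b₃₂ + a₂₄*b₄₂,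
        a₂₁*b₁₃ + a₂₂*b₂₃ + a₂₃*b₃₃ + a₂₄*b₄₃, a₂₁*b₁₄ + a₂₂*b₂₄ + a₂₃*b₃₄ + a₂₄*b₄₄;
       a₃₁*b₁₁ + a₃₂*b₂₁ + a₃₃*b₃₁ + a₃₄*b₄₁, a₃₁*b₁₂ + a₃₂*b₂₂ + a₃₃*b₃₂ + a₃₄*b₄₂,
        a₃₁*b₁₃ + a₃₂*b₂₃ + a₃₃*b₃₃ + a₃₄*b₄₃, a₃₁*b₁₄ + a₃₂*b₂₄ + a₃₃*b₃₄ + a₃₄*b₄₄;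
       a₄₁*b₁₁ + a₄₂*b₂₁ + a₄₃*b₃₁ + a₄₄*b₄₁, a₄₁*b₁₂ + a₄₂*b₂₂ + a₄₃*b₃₂ + a₄₄*b₄₂,
        a₄₁*b₁₃ + a₄₂*b₂₃ + a₄₃*b₃₃ + a₄₄*b₄₃, a₄₁*b₁₄ + a₄₂*b₂₄ + a₄₃*b₃₄ + a₄₄*b₄₄] := by
  ext i j
  fin_cases i <;> fin_cases j <;> simp [Matrix.mul_apply, Fin.sum_univ_four]

theorem Matrix.diagonal_vec4 {α : Type*} [Zero α] (a b c d : α) :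
    diagonal ![a, b, c, d] = !![a, 0, 0, 0; 0, b, 0, 0; 0, 0, c, 0; 0, 0, 0, d] := by
  simp [← Matrix.ext_iff, Fin.forall_fin_succ]

section StructureConstants

variable {V W F : Type*} [AddCommGroup V] [Module ℝ V] [AddCommGroup W] [Module ℝ W]
  [FunLike F V W] [LinearMapClass F ℝ V W]

lemma map_L61T (f : F) (v : Fin 6 → V) (i j : Fin 6) : f (L61T v i j) = L61T (f ∘ v) i j := by
  simp only [L61T, apply_ite f, map_neg, map_zero, Function.comp_apply]

lemma map_L64T (f : F) (v : Fin 6 → V) (i j : Fin 6) : f (L64T v i j) = L64T (f ∘ v) i j := by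
  simp only [L64T, apply_ite f, map_smul, map_zero, Function.comp_apply]

lemma L61T_eq_zero_of_three_le (v : Fin 6 → V) {i : Fin 6} (hi : 3 ≤ i) (j : Fin 6) :
    L61T v i j = 0 := by
  have h : i ≠ 0 ∧ i ≠ 1 ∧ i ≠ 2 := by
    refine ⟨?_, ?_, ?_⟩ <;> rintro rfl <;> exact absurd hi (by decide)
  simp only [L61T, h.1, h.2.1, h.2.2, false_and, ↓reduceIte]

lemma L64T_eq_zero_of_three_le (v : Fin 6 → V) {i : Fin 6} (hi : 3 ≤ i) (j : Fin 6) :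
    L64T v i j = 0 := by
  have h : i ≠ 0 ∧ i ≠ 1 ∧ i ≠ 2 := by
    refine ⟨?_, ?_, ?_⟩ <;> rintro rfl <;> exact absurd hi (by decide)
  simp only [L64T, h.1, h.2.1, h.2.2, false_and, ↓reduceIte]

end StructureConstants

section Lorentz

instance : ContinuousAdd so31 := inferInstanceAs (ContinuousAdd so31.toSubmodule)

lemma eq_of_mem_so31 {A : Matrix (Fin 4) (Fin 4) ℝ} (hA : A ∈ so31) :
    A = !![0, A 0 1, A 0 2, A 0 3; -A 0 1, 0, A 1 2, A 1 3;
      -A 0 2, -A 1 2, 0, A 2 3; A 0 3, A 1 3, A 2 3, 0] := by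
  simp only [mem_skewAdjointMatricesLieSubalgebra, mem_skewAdjointMatricesSubmodule,
    Matrix.IsSkewAdjoint, Matrix.IsAdjointPair] at hA
  ext i j
  have hij := congrFun₂ hA j i
  have hji := congrFun₂ hA i j
  fin_cases i <;> fin_cases j <;> simp [mul_diagonal, diagonal_mul] at hij hji ⊢ <;> linarith

lemma mem_so31_of_eq {A : Matrix (Fin 4) (Fin 4) ℝ} (a b c d e f : ℝ)
    (hA : A = !![0, a, b, c; -a, 0, d, e; -b, -d, 0, f; c, e, f, 0]) : A ∈ so31 := by
  simp only [mem_skewAdjointMatricesLieSubalgebra, mem_skewAdjointMatricesSubmodule,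
    Matrix.IsSkewAdjoint, Matrix.IsAdjointPair, hA]
  ext i j
  fin_cases i <;> fin_cases j <;> simp [mul_diagonal, diagonal_mul]

def so31SignConj (d : Fin 4 → ℝ) (hd : ∀ i, d i * d i = 1) : so31 →ₗ⁅ℝ⁆ so31 :=
  skewAdjointConj _ (diagonal d) (by rw [diagonal_mul_diagonal, ← diagonal_one]; simp [hd])
    (by rw [diagonal_transpose, diagonal_mul_diagonal, diagonal_mul_diagonal]; simp [mul_comm])

lemma coe_so31SignConj (d : Fin 4 → ℝ) (hd : ∀ i, d i * d i = 1) (A : so31) :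
    (so31SignConj d hd A : Matrix (Fin 4) (Fin 4) ℝ) = diagonal d * A * diagonal d := rfl

lemma so31SignConj_apply_apply (d : Fin 4 → ℝ) (hd : ∀ i, d i * d i = 1) (A : so31) :
    so31SignConj d hd (so31SignConj d hd A) = A :=
  skewAdjointConj_apply_apply _ _ _ _ A

/-- Fixes the rotations `so(3)` and negates the boosts. -/
noncomputable def so31TimeReversal : so31 →ₗ⁅ℝ⁆ so31 :=
  so31SignConj ![1, 1, 1, -1] fun i => by fin_cases i <;> norm_num

/-- Fixes the copy of `so(2,1)` acting on the last three coordinates. -/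
noncomputable def so31SpaceReflection : so31 →ₗ⁅ℝ⁆ so31 :=
  so31SignConj ![-1, 1, 1, 1] fun i => by fin_cases i <;> norm_num

lemma so31TimeReversal_apply_apply (A : so31) : so31TimeReversal (so31TimeReversal A) = A :=
  so31SignConj_apply_apply _ _ A

lemma so31SpaceReflection_apply_apply (A : so31) :
    so31SpaceReflection (so31SpaceReflection A) = A :=
  so31SignConj_apply_apply _ _ A

def iso3Chart : (Fin 6 → ℝ) →ₗ[ℝ] Matrix (Fin 4) (Fin 4) ℝ where
  toFun x := !![0, -x 2, x 1, x 3; x 2, 0, -x 0, x 4; -x 1, x 0, 0, x 5; x 3, x 4, x 5, 0]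
  map_add' x y := by
    simp only [Pi.add_apply, of_add_of, cons_add_cons, empty_add_empty, add_zero]
    ring_nf
  map_smul' r x := by
    simp only [Pi.smul_apply, smul_eq_mul, RingHom.id_apply, smul_of, smul_cons, smul_empty,
      mul_zero, mul_neg]

/-- The first three coordinate vectors go to an `sl(2,ℝ)`-triple `H, E, F` of `so(2,1)`, the last
three to a basis of `ad H`-eigenvectors of its complement. -/
def isl2Chart : (Fin 6 → ℝ) →ₗ[ℝ] Matrix (Fin 4) (Fin 4) ℝ where
  toFun x := !![0, -2 * x 4, -x 3 + x 5, x 3 + x 5; 2 * x 4, 0, -x 1 + x 2, x 1 + x 2;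
     x 3 - x 5, x 1 - x 2, 0, 2 * x 0; x 3 + x 5, x 1 + x 2, 2 * x 0, 0]
  map_add' x y := by
    simp only [Pi.add_apply, of_add_of, cons_add_cons, empty_add_empty, add_zero]
    ring_nf
  map_smul' r x := by
    simp only [Pi.smul_apply, smul_eq_mul, RingHom.id_apply, smul_of, smul_cons, smul_empty,
      mul_zero]
    ring_nf

lemma iso3Chart_injective : Function.Injective iso3Chart :=
  Function.LeftInverse.injective (g := fun A => ![A 2 1, A 0 2, A 1 0, A 0 3, A 1 3, A 2 3])
    fun x => by ext i; fin_cases i <;> simp [iso3Chart]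

lemma isl2Chart_injective : Function.Injective isl2Chart :=
  Function.LeftInverse.injective (g := fun A => ![A 2 3 / 2, (A 1 3 - A 1 2) / 2,
      (A 1 2 + A 1 3) / 2, (A 0 3 - A 0 2) / 2, -A 0 1 / 2, (A 0 2 + A 0 3) / 2])
    fun x => by ext i; fin_cases i <;> simp [isl2Chart] <;> ring

lemma range_iso3Chart : LinearMap.range iso3Chart = so31.toSubmodule := by
  ext A
  constructor
  · rintro ⟨x, rfl⟩
    exact mem_so31_of_eq (-x 2) (x 1) (x 3) (-x 0) (x 4) (x 5) (by
      simp only [iso3Chart, LinearMap.coe_mk, AddHom.coe_mk, neg_neg])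
  · intro hA
    refine ⟨![-A 1 2, A 0 2, -A 0 1, A 0 3, A 1 3, A 2 3], ?_⟩
    conv_rhs => rw [eq_of_mem_so31 hA]
    simp only [iso3Chart, LinearMap.coe_mk, AddHom.coe_mk, cons_val, neg_neg]

lemma range_isl2Chart : LinearMap.range isl2Chart = so31.toSubmodule := by
  ext A
  constructor
  · rintro ⟨x, rfl⟩
    exact mem_so31_of_eq (-2 * x 4) (-x 3 + x 5) (x 3 + x 5) (-x 1 + x 2) (x 1 + x 2) (2 * x 0)
      (by simp only [isl2Chart, LinearMap.coe_mk, AddHom.coe_mk]; ring_nf)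
  · intro hA
    refine ⟨![A 2 3 / 2, (A 1 3 - A 1 2) / 2, (A 1 2 + A 1 3) / 2, (A 0 3 - A 0 2) / 2,
      -A 0 1 / 2, (A 0 2 + A 0 3) / 2], ?_⟩
    conv_rhs => rw [eq_of_mem_so31 hA]
    simp only [isl2Chart, LinearMap.coe_mk, AddHom.coe_mk, cons_val]
    ring_nf

noncomputable def so31BasisIso3 : Module.Basis (Fin 6) ℝ so31 :=
  so31.basisOfInjective iso3Chart iso3Chart_injective range_iso3Chart

noncomputable def so31BasisIsl2 : Module.Basis (Fin 6) ℝ so31 :=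
  so31.basisOfInjective isl2Chart isl2Chart_injective range_isl2Chart

-- With `← zero_empty`, zero rows such as `![0, 0, 0, 0]` collapse to `0` on both sides alike.
lemma so31TimeReversal_so31BasisIso3 (i : Fin 6) :
    so31TimeReversal (so31BasisIso3 i) = if i < 3 then so31BasisIso3 i else -so31BasisIso3 i := by
  fin_cases i <;> simp only [Fin.reduceFinMk, Fin.reduceLT, ↓reduceIte] <;> apply Subtype.ext <;>
    simp only [so31TimeReversal, coe_so31SignConj, so31BasisIso3,
      LieSubalgebra.coe_basisOfInjective, iso3Chart, LinearMap.coe_mk, AddHom.coe_mk,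
      NegMemClass.coe_neg, Pi.single_apply, Fin.reduceEq, Fin.isValue, ↓reduceIte, neg_zero] <;>
    simp only [diagonal_vec4, mul_fin_four] <;> norm_num [-zero_empty, ← zero_empty]

lemma so31SpaceReflection_so31BasisIsl2 (i : Fin 6) :
    so31SpaceReflection (so31BasisIsl2 i) = if i < 3 then so31BasisIsl2 i else -so31BasisIsl2 i := by
  fin_cases i <;> simp only [Fin.reduceFinMk, Fin.reduceLT, ↓reduceIte] <;> apply Subtype.ext <;>
    simp only [so31SpaceReflection, coe_so31SignConj, so31BasisIsl2,
      LieSubalgebra.coe_basisOfInjective, isl2Chart, LinearMap.coe_mk, AddHom.coe_mk,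
      NegMemClass.coe_neg, Pi.single_apply, Fin.reduceEq, Fin.isValue, ↓reduceIte, mul_zero,
      mul_one, neg_zero, add_zero, sub_zero] <;>
    simp only [diagonal_vec4, mul_fin_four] <;> norm_num [-zero_empty, ← zero_empty]

lemma lie_so31BasisIso3 (i j : Fin 6) (hi : i < 3) (hij : i < j) :
    ⁅so31BasisIso3 i, so31BasisIso3 j⁆ = L61T so31BasisIso3 i j := by
  fin_cases i <;> fin_cases j <;> simp only [Fin.reduceFinMk, Fin.reduceLT] at hi hij <;>
    simp only [L61T, Fin.reduceFinMk, Fin.isValue, Fin.reduceEq, and_true, and_false,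
      ↓reduceIte] <;> apply Subtype.ext <;>
    simp only [LieSubalgebra.coe_bracket, so31BasisIso3, LieSubalgebra.coe_basisOfInjective,
      iso3Chart, LinearMap.coe_mk, AddHom.coe_mk, NegMemClass.coe_neg, Pi.single_apply,
      Fin.reduceEq, Fin.isValue, ↓reduceIte, neg_zero] <;>
    simp only [Ring.lie_def, mul_fin_four] <;> norm_num [-zero_empty, ← zero_empty]

lemma lie_so31BasisIsl2 (i j : Fin 6) (hi : i < 3) (hij : i < j) :
    ⁅so31BasisIsl2 i, so31BasisIsl2 j⁆ = L64T so31BasisIsl2 i j := by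
  fin_cases i <;> fin_cases j <;> simp only [Fin.reduceFinMk, Fin.reduceLT] at hi hij <;>
    simp only [L64T, Fin.reduceFinMk, Fin.isValue, Fin.reduceEq, and_true, and_false,
      ↓reduceIte] <;> apply Subtype.ext <;>
    simp only [LieSubalgebra.coe_bracket, so31BasisIsl2, LieSubalgebra.coe_basisOfInjective,
      isl2Chart, LinearMap.coe_mk, AddHom.coe_mk, SetLike.val_smul, Pi.single_apply,
      Fin.reduceEq, Fin.isValue, ↓reduceIte, mul_zero, mul_one, neg_zero, add_zero, sub_zero] <;>
    simp only [Ring.lie_def, mul_fin_four] <;> norm_num [-zero_empty, ← zero_empty]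

lemma contractedBracket_so31BasisIso3 (i j : Fin 6) (hij : i < j) :
    contractedBracket so31TimeReversal (so31BasisIso3 i) (so31BasisIso3 j)
      = L61T so31BasisIso3 i j := by
  rcases lt_or_ge i 3 with hi | hi
  · rw [contractedBracket_of_apply_eq_self
      (by simpa [hi] using so31TimeReversal_so31BasisIso3 i), lie_so31BasisIso3 i j hi hij]
  · have hj : ¬j < 3 := not_lt.2 (hi.trans hij.le)
    rw [contractedBracket_of_apply_eq_neg
      (by simpa [not_lt.2 hi] using so31TimeReversal_so31BasisIso3 i)
      (by simpa [hj] using so31TimeReversal_so31BasisIso3 j)]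
    exact (L61T_eq_zero_of_three_le _ hi j).symm

lemma contractedBracket_so31BasisIsl2 (i j : Fin 6) (hij : i < j) :
    contractedBracket so31SpaceReflection (so31BasisIsl2 i) (so31BasisIsl2 j)
      = L64T so31BasisIsl2 i j := by
  rcases lt_or_ge i 3 with hi | hi
  · rw [contractedBracket_of_apply_eq_self
      (by simpa [hi] using so31SpaceReflection_so31BasisIsl2 i), lie_so31BasisIsl2 i j hi hij]
  · have hj : ¬j < 3 := not_lt.2 (hi.trans hij.le)
    rw [contractedBracket_of_apply_eq_neg
      (by simpa [not_lt.2 hi] using so31SpaceReflection_so31BasisIsl2 i)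
      (by simpa [hj] using so31SpaceReflection_so31BasisIsl2 j)]
    exact (L64T_eq_zero_of_three_le _ hi j).symm

end Lorentz


/-- The Lorentz algebra `so(3,1)` contracts onto both `L_{6,1} = Iso(3)` and
`L_{6,4} = Isl(2,ℝ)`. -/
theorem so31_contracts_onto_L61_and_L64
    (L : Type) [LieRing L] [LieAlgebra ℝ L] (b : Module.Basis (Fin 6) ℝ L)
    (hL : ∀ i j : Fin 6, i < j → ⁅b i, b j⁆ = L61T (⇑b) i j)
    (M : Type) [LieRing M] [LieAlgebra ℝ M] (c : Module.Basis (Fin 6) ℝ M)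
    (hM : ∀ i j : Fin 6, i < j → ⁅c i, c j⁆ = L64T (⇑c) i j) :
    IsContraction (↥so31) L ∧ IsContraction (↥so31) M := by
  constructor
  · refine isContraction_of_basis so31TimeReversal_apply_apply so31BasisIso3 b
      fun i j hij => ?_
    rw [contractedBracket_so31BasisIso3 i j hij, map_L61T, hL i j hij]
    congr 1; funext k; simp
  · refine isContraction_of_basis so31SpaceReflection_apply_apply so31BasisIsl2 c
      fun i j hij => ?_
    rw [contractedBracket_so31BasisIsl2 i j hij, map_L64T, hM i j hij]
    congr 1; funext k; simp
end
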